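/- arXiv:2106.13520 — 2 statements merged into one kernel-verified Lean document; each statement's English description precedes it below -/
import Mathlib

section
/- V-local isomorphisms (F-global on function symbols) are compatible with rewriting: let R = (F,V,𝓡) and R' = (F',V',𝓡') be TRSs, φ = (φ₁,…,φₙ) a family of term isomorphisms witnessing a local isomorphism from R to R' such that all φᵢ agree on F (φ₁|_F = … = φₙ|_F). Then for all terms s, t over (F,V) and every index i: s →_R t if and only if φᵢ(s) →_{R'} φᵢ(t). -/
set_option autoImplicit false

universe u
variable {F V F' V' F'' V'' : Type}

inductive Term (F V : Type) : Type where
  | var : V → Term F V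
  | app : F → List (Term F V) → Term F V

namespace Term

def map (φF : F → F') (φV : V → V') : Term F V → Term F' V'
  | var x => var (φV x)
  | app f ts => app (φF f) (ts.attach.map fun t => map φF φV t.1)

decreasing_by
  have := List.sizeOf_lt_of_mem t.2
  simp_wf
  omega

def subst (σ : V → Term F V) : Term F V → Term F V
  | var x => σ x
  | app f ts => app f (ts.attach.map fun t => subst σ t.1)

decreasing_by
  have := List.sizeOf_lt_of_mem t.2
  simp_wf
  omega

def vars : Term F V → Set V
  | var x => {x}
  | app _ ts => {v | ∃ t ∈ ts.attach, v ∈ vars t.1}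

decreasing_by
  have := List.sizeOf_lt_of_mem t.2
  simp_wf
  omega

end Term

inductive Ctx (F V : Type) : Type where
  | hole : Ctx F V
  | app : F → List (Term F V) → Ctx F V → List (Term F V) → Ctx F V

def Ctx.fill : Ctx F V → Term F V → Term F V
  | .hole, t => t
  | .app f pre C post, t => .app f (pre ++ [C.fill t] ++ post)

def Ctx.map (φF : F → F') (φV : V → V') : Ctx F V → Ctx F' V'
  | .hole => .hole
  | .app f pre C post => .app (φF f) (pre.map (Term.map φF φV)) (C.map φF φV) (post.map (Term.map φF φV))

abbrev Rule (F V : Type) := Term F V × Term F V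

def ruleMap (φF : F → F') (φV : V → V') (p : Rule F V) : Rule F' V' :=
  (p.1.map φF φV, p.2.map φF φV)

def Rewrites (𝓡 : Set (Rule F V)) (s t : Term F V) : Prop :=
  ∃ (C : Ctx F V) (σ : V → Term F V) (p : Rule F V),
    p ∈ 𝓡 ∧ s = C.fill (p.1.subst σ) ∧ t = C.fill (p.2.subst σ)

def IsTermIso (ar : F → ℕ) (ar' : F' → ℕ) (φF : F → F') (φV : V → V') : Prop :=
  Function.Bijective φF ∧ Function.Bijective φV ∧ ∀ f, ar' (φF f) = ar f

def IsTRS (ar : F → ℕ) (𝓡 : Set (Rule F V)) : Prop :=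
  𝓡.Finite ∧ ∀ p ∈ 𝓡, (∀ x, p.1 ≠ Term.var x) ∧ p.2.vars ⊆ p.1.vars

/-!
Renaming function symbols by `φF` and variables by an arbitrary `φV` sends a step
`C[σ ℓ] → C[σ r]` to `C'[σ' ℓ'] → C'[σ' r']`, where `ℓ' → r'` is the rule renamed by its own
variable bijection `ψ`; the substitution `σ'` is `σ` transported along `ψ`, which needs only that
`ψ` is injective. The converse is the same argument for the inverse isomorphisms, which is
possible because all `φᵢ` share the same map `φF` on function symbols.
-/

namespace Term

theorem map_map (φF : F → F') (φV : V → V') (ψF : F' → F'') (ψV : V' → V'') (t : Term F V) :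
    (t.map φF φV).map ψF ψV = t.map (ψF ∘ φF) (ψV ∘ φV) := by
  induction t using Term.map.induct with
  | case1 x => simp only [Term.map, Function.comp_apply]
  | case2 f ts ih =>
    simp only [Term.map, List.attach_map_val, List.map_map, Term.app.injEq, Function.comp_apply,
      true_and]
    exact List.map_congr_left fun t ht => ih ⟨t, ht⟩

theorem map_id (t : Term F V) : t.map id id = t := by
  induction t using Term.map.induct with
  | case1 x => simp only [Term.map, id]
  | case2 f ts ih =>
    simp only [Term.map, List.attach_map_val, Term.app.injEq, id, true_and]
    exact (List.map_congr_left fun t ht => ih ⟨t, ht⟩).trans (List.map_id ts)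

theorem map_map_of_leftInverse {φF : F → F'} {φV : V → V'} {ψF : F' → F} {ψV : V' → V}
    (hF : Function.LeftInverse ψF φF) (hV : Function.LeftInverse ψV φV) (t : Term F V) :
    (t.map φF φV).map ψF ψV = t := by
  rw [map_map, hF.comp_eq_id, hV.comp_eq_id, map_id]

theorem map_subst (φF : F → F') (φV : V → V') (φV' : V → V')
    (σ : V → Term F V) (σ' : V' → Term F' V')
    (hσ : ∀ x, σ' (φV' x) = (σ x).map φF φV) (t : Term F V) :
    (t.subst σ).map φF φV = (t.map φF φV').subst σ' := by
  induction t using Term.subst.induct with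
  | case1 x => simp only [Term.map, Term.subst, hσ]
  | case2 f ts ih =>
    simp only [Term.map, Term.subst, List.attach_map_val, List.map_map, Term.app.injEq, true_and]
    exact List.map_congr_left fun t ht => ih ⟨t, ht⟩

end Term

theorem Ctx.map_fill (φF : F → F') (φV : V → V') (C : Ctx F V) (t : Term F V) :
    (C.fill t).map φF φV = (C.map φF φV).fill (t.map φF φV) := by
  induction C with
  | hole => rfl
  | app f pre C post ih =>
    simp only [Ctx.fill, Ctx.map, Term.map, List.attach_map_val, List.map_append,
      List.map_cons, List.map_nil, ih]

theorem ruleMap_ruleMap_of_leftInverse {φF : F → F'} {φV : V → V'} {ψF : F' → F} {ψV : V' → V}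
    (hF : Function.LeftInverse ψF φF) (hV : Function.LeftInverse ψV φV) (p : Rule F V) :
    ruleMap ψF ψV (ruleMap φF φV p) = p := by
  simp only [ruleMap, Term.map_map_of_leftInverse hF hV]

theorem Rewrites.map {𝓡 : Set (Rule F V)} {𝓡' : Set (Rule F' V')} (φF : F → F') (φV : V → V')
    (h𝓡 : ∀ q ∈ 𝓡, ∃ ψ : V → V', Function.Injective ψ ∧ ruleMap φF ψ q ∈ 𝓡')
    {s t : Term F V} (hst : Rewrites 𝓡 s t) : Rewrites 𝓡' (s.map φF φV) (t.map φF φV) := by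
  obtain ⟨C, σ, q, hq, rfl, rfl⟩ := hst
  obtain ⟨ψ, hψ, hq'⟩ := h𝓡 q hq
  have hσ (x : V) :
      Function.extend ψ (fun x => (σ x).map φF φV) Term.var (ψ x) = (σ x).map φF φV :=
    hψ.extend_apply _ _ x
  exact ⟨C.map φF φV, _, ruleMap φF ψ q, hq',
    by rw [Ctx.map_fill, Term.map_subst φF φV ψ σ _ hσ]; rfl,
    by rw [Ctx.map_fill, Term.map_subst φF φV ψ σ _ hσ]; rfl⟩

theorem vLocal_iso_compatible_with_rewriting_general
    {F V F' V' : Type} (ar : F → ℕ) (ar' : F' → ℕ)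
    (𝓡 : Set (Rule F V)) (𝓡' : Set (Rule F' V'))
    (φF : F → F') (ΦV : Rule F V → V → V')
    (hiso : ∀ p ∈ 𝓡, IsTermIso ar ar' φF (ΦV p))
    (him : (fun p => ruleMap φF (ΦV p) p) '' 𝓡 = 𝓡') :
    ∀ p ∈ 𝓡, ∀ s t : Term F V,
      Rewrites 𝓡 s t ↔ Rewrites 𝓡' (Term.map φF (ΦV p) s) (Term.map φF (ΦV p) t) := by
  intro p hp s t
  obtain ⟨hφF, hφV, -⟩ := hiso p hp
  have hinvF := Function.leftInverse_surjInv hφF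
  refine ⟨Rewrites.map φF (ΦV p) fun q hq => ⟨ΦV q, (hiso q hq).2.1.1, him ▸ ⟨q, hq, rfl⟩⟩,
    fun h => ?_⟩
  have h𝓡' : ∀ q' ∈ 𝓡', ∃ ψ : V' → V, Function.Injective ψ ∧
      ruleMap (Function.surjInv hφF.2) ψ q' ∈ 𝓡 := by
    rw [← him]
    rintro _ ⟨q, hq, rfl⟩
    have hφVq := (hiso q hq).2.1
    exact ⟨Function.surjInv hφVq.2, Function.injective_surjInv hφVq.2,
      by rwa [ruleMap_ruleMap_of_leftInverse hinvF (Function.leftInverse_surjInv hφVq)]⟩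
  simpa only [Term.map_map_of_leftInverse hinvF (Function.leftInverse_surjInv hφV)] using
    Rewrites.map (Function.surjInv hφF.2) (Function.surjInv hφV.2) h𝓡' h

theorem vLocal_iso_compatible_with_rewriting
    {F V F' V' : Type} (ar : F → ℕ) (ar' : F' → ℕ)
    (𝓡 : Set (Rule F V)) (𝓡' : Set (Rule F' V'))
    (hR : IsTRS ar 𝓡) (hR' : IsTRS ar' 𝓡')
    (φF : F → F') (ΦV : Rule F V → V → V')
    (hiso : ∀ p ∈ 𝓡, IsTermIso ar ar' φF (ΦV p))
    (him : (fun p => ruleMap φF (ΦV p) p) '' 𝓡 = 𝓡') :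
    ∀ p ∈ 𝓡, ∀ s t : Term F V,
      Rewrites 𝓡 s t ↔ Rewrites 𝓡' (Term.map φF (ΦV p) s) (Term.map φF (ΦV p) t) :=
  vLocal_iso_compatible_with_rewriting_general ar ar' 𝓡 𝓡' φF ΦV hiso him
end

section
/- Directed graph isomorphism reduces to global TRS isomorphism via the encoding R(G): two finite unlabelled directed graphs G₁ = (V₁,E₁) and G₂ = (V₂,E₂), having no isolated vertices, are isomorphic if and only if the TRSs R(G₁) and R(G₂) are globally isomorphic, where R(G) = (F,{x},𝓡) with F = {f_v : v ∈ V} ∪ {c} (each f_v unary, c a constant) and 𝓡 = {f_v(f_w(x)) → c : (v,w) ∈ E}. -/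
set_option autoImplicit false

universe u
variable {F V F' V' F'' V'' : Type}

/-- Global isomorphism between rule sets. -/
def GlobalIsoP {F V F' V' : Type} (ar : F → ℕ) (ar' : F' → ℕ)
    (𝓡 : Set (Rule F V)) (𝓡' : Set (Rule F' V')) : Prop :=
  ∃ (φF : F → F') (φV : V → V'),
    IsTermIso ar ar' φF φV ∧ ruleMap φF φV '' 𝓡 = 𝓡'

/-- F-global isomorphism: a global isomorphism that is the identity on variables. -/
def FGlobalIsoP {F V F' : Type} (ar : F → ℕ) (ar' : F' → ℕ)
    (𝓡 : Set (Rule F V)) (𝓡' : Set (Rule F' V)) : Prop :=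
  ∃ φF : F → F', IsTermIso ar ar' φF (id : V → V) ∧ ruleMap φF (id : V → V) '' 𝓡 = 𝓡'

/-- V-global isomorphism: a global isomorphism that is the identity on function symbols. -/
def VGlobalIsoP {F V V' : Type} (ar : F → ℕ)
    (𝓡 : Set (Rule F V)) (𝓡' : Set (Rule F V')) : Prop :=
  ∃ φV : V → V', IsTermIso ar ar (id : F → F) φV ∧ ruleMap (id : F → F) φV '' 𝓡 = 𝓡'

/-- Arities for the encoding `R(G)`: every `f_v` is unary, `c` (= `none`) is a constant. -/
def arG {W : Type} : Option W → ℕ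
  | none => 0
  | some _ => 1

/-- The encoding `R(G)`: rules `f_v(f_w(x)) → c` for each edge `(v,w)`. -/
def encodeR {W : Type} (E : Set (W × W)) : Set (Rule (Option W) Unit) :=
  {r | ∃ e ∈ E, r =
    (Term.app (some e.1) [Term.app (some e.2) [Term.var ()]], Term.app none [])}

lemma ruleMap_encode {W W' : Type} (φF : Option W → Option W') (φV : Unit → Unit) (a b : W) :
    ruleMap φF φV
      (Term.app (some a) [Term.app (some b) [Term.var ()]], Term.app none []) =
      (Term.app (φF (some a)) [Term.app (φF (some b)) [Term.var ()]],
        Term.app (φF none) []) := by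
  simp [ruleMap, Term.map]

theorem graphIso_iff_globalIso_encodeR
    {V₁ V₂ : Type} [Fintype V₁] [Fintype V₂]
    (E₁ : Set (V₁ × V₁)) (E₂ : Set (V₂ × V₂))
    (h₁ : ∀ v : V₁, ∃ w, (v, w) ∈ E₁ ∨ (w, v) ∈ E₁)
    (h₂ : ∀ v : V₂, ∃ w, (v, w) ∈ E₂ ∨ (w, v) ∈ E₂) :
    (∃ φ : V₁ → V₂, Function.Bijective φ ∧
       ∀ v w, (v, w) ∈ E₁ ↔ (φ v, φ w) ∈ E₂) ↔
    GlobalIsoP arG arG (encodeR E₁) (encodeR E₂) := by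
  constructor
  · rintro ⟨φ, hb, hE⟩
    refine ⟨Option.map φ, id, ⟨?_, Function.bijective_id, ?_⟩, ?_⟩
    · have : Option.map φ = (Equiv.ofBijective φ hb).optionCongr := by
        funext x; cases x <;> simp
      rw [this]; exact (Equiv.ofBijective φ hb).optionCongr.bijective
    · intro f; cases f <;> simp [arG]
    · ext r
      simp only [Set.mem_image, encodeR, Set.mem_setOf_eq]
      constructor
      · rintro ⟨r₁, ⟨e, he, rfl⟩, rfl⟩
        exact ⟨(φ e.1, φ e.2), (hE e.1 e.2).1 he, by
          rw [ruleMap_encode]; simp⟩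
      · rintro ⟨e, he, rfl⟩
        obtain ⟨v, hv⟩ := hb.2 e.1
        obtain ⟨w, hw⟩ := hb.2 e.2
        refine ⟨(Term.app (some v) [Term.app (some w) [Term.var ()]], Term.app none []),
          ⟨(v, w), ?_, rfl⟩, ?_⟩
        · exact (hE v w).2 (by rw [hv, hw]; exact he)
        · rw [ruleMap_encode]; simp [hv, hw]
  · rintro ⟨φF, φV, ⟨hbF, _, har⟩, himg⟩
    have hnone : φF none = none := by
      have := har none
      cases h : φF none with
      | none => rfl
      | some u => rw [h] at this; simp [arG] at this
    have hsome : ∀ v : V₁, ∃ u, φF (some v) = some u := by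
      intro v
      have := har (some v)
      cases h : φF (some v) with
      | none => rw [h] at this; simp [arG] at this
      | some u => exact ⟨u, rfl⟩
    choose φ hφ using hsome
    have hinj : Function.Injective φ := by
      intro a b hab
      have : φF (some a) = φF (some b) := by rw [hφ, hφ, hab]
      have := hbF.1 this
      exact Option.some_injective _ this
    have hsurj : Function.Surjective φ := by
      intro u
      obtain ⟨x, hx⟩ := hbF.2 (some u)
      cases x with
      | none => rw [hnone] at hx; exact absurd hx (by simp)
      | some v =>
        refine ⟨v, ?_⟩
        have := hφ v
        rw [hx] at this
        exact (Option.some_injective _ this.symm)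
    refine ⟨φ, ⟨hinj, hsurj⟩, ?_⟩
    intro v w
    constructor
    · intro hvw
      have hmem : ruleMap φF φV
          (Term.app (some v) [Term.app (some w) [Term.var ()]], Term.app none [])
          ∈ encodeR E₂ := by
        rw [← himg]
        exact Set.mem_image_of_mem _ ⟨(v, w), hvw, rfl⟩
      rw [ruleMap_encode, hφ, hφ, hnone] at hmem
      obtain ⟨e, he, heq⟩ := hmem
      simp [Prod.ext_iff] at heq
      rw [heq.1, heq.2]
      exact he
    · intro huw
      have hmem : (Term.app (some (φ v)) [Term.app (some (φ w)) [Term.var ()]],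
          (Term.app none [] : Term (Option V₂) Unit)) ∈ encodeR E₂ :=
        ⟨(φ v, φ w), huw, rfl⟩
      rw [← himg] at hmem
      obtain ⟨r₁, ⟨e, he, rfl⟩, heq⟩ := hmem
      rw [ruleMap_encode, hφ, hφ, hnone] at heq
      simp [Prod.ext_iff] at heq
      have hv : e.1 = v := hinj heq.1
      have hw : e.2 = w := hinj heq.2
      rw [← hv, ← hw]
      exact he
end
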